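/- arXiv:quant-ph/0304094 — 6 statements merged into one kernel-verified Lean document; each statement's English description precedes it below -/
import Mathlib

section
/- For every natural number n and all s, t with t - s = ε, the polynomial identity Σ_{k=0}^n k! t^k C(n,k)^2 · N^{↓(n-k)} = Σ_{k=0}^n k! s^k C(n,k)^2 · (N+ε)^{↑(n-k)} holds, where N^{↓m} = N(N-ε)···(N-(m-1)ε) is the falling factorial and (N+ε)^{↑m} = (N+ε)(N+2ε)···(N+mε) is the rising factorial with increment ε. -/
/-!
Substitute `t = s + ε` and expand `(s + ε)ᵏ` binomially on the left. On the right, the rising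
factorial is the falling factorial `(N + mε)^{↓m}`, which Vandermonde's convolution for falling
factorials splits as `∑_b C(m, b) (m!/(m-b)!) εᵇ N^{↓(m-b)}`. Both sides thereby become
sums of `sᵃ εᵇ N^{↓c}` over `a + b + c = n`, with the same coefficient `n!² / (a! b! c!²)`.
-/

open Finset Nat

section StepFactorial

variable {R : Type*} [CommRing R]

def fallingFactorial (ε x : R) (m : ℕ) : R := ∏ j ∈ range m, (x - j * ε)

def risingFactorial (ε x : R) (m : ℕ) : R := ∏ j ∈ range m, (x + (j + 1) * ε)

variable (ε : R)

theorem fallingFactorial_succ (x : R) (m : ℕ) :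
    fallingFactorial ε x (m + 1) = fallingFactorial ε x m * (x - m * ε) :=
  prod_range_succ _ _

theorem fallingFactorial_add (x y : R) (m : ℕ) :
    fallingFactorial ε (x + y) m =
      ∑ ij ∈ antidiagonal m,
        (m.choose ij.1 : R) * (fallingFactorial ε x ij.1 * fallingFactorial ε y ij.2) := by
  induction m with
  | zero => simp [fallingFactorial]
  | succ m ih =>
    rw [sum_antidiagonal_choose_succ_mul
        (fun i j => fallingFactorial ε x i * fallingFactorial ε y j), ← sum_add_distrib,
      fallingFactorial_succ, ih, sum_mul]
    refine sum_congr rfl fun ij hij => ?_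
    rw [HasAntidiagonal.mem_antidiagonal] at hij
    rw [choose_symm_of_eq_add hij.symm, fallingFactorial_succ, fallingFactorial_succ, ← hij]
    push_cast
    ring

theorem risingFactorial_eq_fallingFactorial (x : R) (m : ℕ) :
    risingFactorial ε x m = fallingFactorial ε (m * ε + x) m := by
  rw [fallingFactorial, ← prod_range_reflect]
  refine prod_congr rfl fun j hj => ?_
  rw [mem_range] at hj
  rw [Nat.sub_sub, Nat.cast_sub (by omega)]
  push_cast
  ring

theorem fallingFactorial_natCast_mul (m b : ℕ) :
    fallingFactorial ε (m * ε) b = m.descFactorial b * ε ^ b := by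
  induction b with
  | zero => simp [fallingFactorial]
  | succ b ih =>
    rw [fallingFactorial_succ, ih, descFactorial_succ, pow_succ]
    rcases le_or_gt b m with hbm | hmb
    · push_cast [hbm]
      ring
    · simp [descFactorial_eq_zero_iff_lt.mpr hmb]

theorem risingFactorial_eq_sum_fallingFactorial (x : R) (m : ℕ) :
    risingFactorial ε x m =
      ∑ ij ∈ antidiagonal m,
        ((m.choose ij.1 * m.descFactorial ij.1 : ℕ) : R) * ε ^ ij.1 *
          fallingFactorial ε x ij.2 := by
  rw [risingFactorial_eq_fallingFactorial, fallingFactorial_add]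
  refine sum_congr rfl fun ij _ => ?_
  rw [fallingFactorial_natCast_mul]
  push_cast
  ring

end StepFactorial

theorem sum_antidiagonal_sum_antidiagonal_fst {M : Type*} [AddCommMonoid M]
    (f : ℕ → ℕ → ℕ → M) (n : ℕ) :
    ∑ p ∈ antidiagonal n, ∑ q ∈ antidiagonal p.1, f q.1 q.2 p.2 =
      ∑ p ∈ antidiagonal n, ∑ q ∈ antidiagonal p.2, f p.1 q.1 q.2 := by
  rw [sum_sigma', sum_sigma']
  refine sum_nbij' (fun x => ⟨(x.2.1, x.2.2 + x.1.2), (x.2.2, x.1.2)⟩)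
    (fun x => ⟨(x.1.1 + x.2.1, x.2.2), (x.1.1, x.2.1)⟩) ?_ ?_ ?_ ?_ ?_
  all_goals
    rintro ⟨⟨k, c⟩, ⟨a, b⟩⟩ h
    simp only [mem_sigma, HasAntidiagonal.mem_antidiagonal, and_true] at h ⊢
  · omega
  · omega
  · rw [← h.2]
  · rw [← h.2]

theorem factorial_mul_choose_sq_mul_choose {a b c n : ℕ} (h : a + b + c = n) :
    (a + b)! * n.choose (a + b) ^ 2 * (a + b).choose a =
      a ! * n.choose a ^ 2 * ((b + c).choose b * (b + c).descFactorial b) := by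
  subst h
  have hn₁ : (a + b + c).choose (a + b) * (a + b)! * c ! = (a + b + c)! := by
    simpa using choose_mul_factorial_mul_factorial (le_add_right (a + b) c)
  have hn₂ : (a + b + c).choose a * a ! * (b + c)! = (a + b + c)! := by
    simpa [add_assoc] using choose_mul_factorial_mul_factorial (le_add_right a (b + c))
  have hab : (a + b).choose a * a ! * b ! = (a + b)! := by
    simpa using choose_mul_factorial_mul_factorial (le_add_right a b)
  have hbc : (b + c).choose b * b ! * c ! = (b + c)! := by
    simpa using choose_mul_factorial_mul_factorial (le_add_right b c)
  have hdesc : c ! * (b + c).descFactorial b = (b + c)! := by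
    simpa using factorial_mul_descFactorial (le_add_right b c)
  apply Nat.eq_of_mul_eq_mul_right (by positivity : 0 < a ! * b ! * c ! ^ 2)
  calc _ = ((a + b + c).choose (a + b) * (a + b)! * c !) ^ 2 := by rw [← hab]; ring
    _ = ((a + b + c).choose a * a ! * (b + c)!) ^ 2 := by rw [hn₁, hn₂]
    _ = ((a + b + c).choose a * a !) ^ 2 * ((b + c).choose b * b ! * c !) *
          (c ! * (b + c).descFactorial b) := by
        rw [hbc, hdesc]; ring
    _ = _ := by ring

theorem sum_antidiagonal_fallingFactorial_eq_risingFactorial {R : Type*} [CommRing R]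
    (N ε s : R) (n : ℕ) :
    ∑ p ∈ antidiagonal n,
        (p.1 ! : R) * (s + ε) ^ p.1 * (n.choose p.1 : R) ^ 2 * fallingFactorial ε N p.2 =
      ∑ p ∈ antidiagonal n,
        (p.1 ! : R) * s ^ p.1 * (n.choose p.1 : R) ^ 2 * risingFactorial ε N p.2 := by
  let F (a b c : ℕ) : R := (((a + b)! * n.choose (a + b) ^ 2 * (a + b).choose a : ℕ) : R) *
    s ^ a * ε ^ b * fallingFactorial ε N c
  calc _ = ∑ p ∈ antidiagonal n, ∑ q ∈ antidiagonal p.1, F q.1 q.2 p.2 := by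
        refine sum_congr rfl fun p _ => ?_
        rw [(Commute.all s ε).add_pow', mul_sum, sum_mul, sum_mul]
        refine sum_congr rfl fun q hq => ?_
        rw [HasAntidiagonal.mem_antidiagonal] at hq
        simp only [F, ← hq, nsmul_eq_mul]
        push_cast
        ring
    _ = ∑ p ∈ antidiagonal n, ∑ q ∈ antidiagonal p.2, F p.1 q.1 q.2 :=
        sum_antidiagonal_sum_antidiagonal_fst F n
    _ = _ := by
        refine sum_congr rfl fun p hp => ?_
        rw [risingFactorial_eq_sum_fallingFactorial, mul_sum]
        refine sum_congr rfl fun q hq => ?_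
        rw [HasAntidiagonal.mem_antidiagonal] at hp hq
        simp only [F]
        rw [factorial_mul_choose_sq_mul_choose (c := q.2) (by omega), ← hq]
        push_cast
        ring

theorem noncommutativity_identity (R : Type*) [CommRing R] (N ε t s : R)
    (h : t - s = ε) (n : ℕ) :
    ∑ k ∈ Finset.range (n + 1), (k.factorial : R) * t ^ k * (n.choose k : R) ^ 2 *
        ∏ j ∈ Finset.range (n - k), (N - (j : R) * ε) =
      ∑ k ∈ Finset.range (n + 1), (k.factorial : R) * s ^ k * (n.choose k : R) ^ 2 *
        ∏ j ∈ Finset.range (n - k), (N + ((j : R) + 1) * ε) := by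
  obtain rfl : t = s + ε := by linear_combination h
  simpa only [Nat.sum_antidiagonal_eq_sum_range_succ_mk, fallingFactorial, risingFactorial] using
    sum_antidiagonal_fallingFactorial_eq_risingFactorial N ε s n
end

section
/- For every natural number n, Σ_{k=0}^n (k!·k / 2^{k-1}) · C(n,k)^2 · ( N^{↓(n-k)} + (-1)^k (N+1)^{↑(n-k)} ) = 0 as a polynomial identity in N. -/
open Polynomial

open Finset in
private noncomputable def Fp (d : ℕ) : ℚ[X] := ∏ j ∈ Finset.range d, (X - (j : ℚ[X]))

open Finset in
private noncomputable def Rp (m : ℕ) : ℚ[X] := ∏ j ∈ Finset.range m, (X + (j : ℚ[X]) + 1)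

private def aa (n k : ℕ) : ℚ := (k.factorial * k : ℚ) / 2 ^ (k - 1) * (n.choose k : ℚ) ^ 2

private def cc (m j : ℕ) : ℚ := (m.choose j : ℚ) ^ 2 * (j.factorial : ℚ)

private lemma Fp_succ (d : ℕ) : Fp (d + 1) = Fp d * (X - (d : ℚ[X])) := by
  rw [Fp, Fp, Finset.prod_range_succ]

private lemma Fp_mul_X (d : ℕ) : Fp d * X = Fp (d + 1) + C (d : ℚ) * Fp d := by
  rw [Fp_succ, C_eq_natCast]
  ring

private lemma cc_rec (m j : ℕ) (hj : j ≤ m) :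
    cc (m + 1) (j + 1) = cc m (j + 1) + cc m j * (((m - j : ℕ) : ℚ) + (m : ℚ) + 1) := by
  have h1 : ((m.choose (j + 1) : ℚ)) * (j + 1) = (m.choose j : ℚ) * ((m : ℚ) - j) := by
    have := Nat.choose_succ_right_eq m j
    have h2 := congrArg (Nat.cast : ℕ → ℚ) this
    push_cast [Nat.cast_sub hj] at h2
    linarith [h2]
  have hp : (((m + 1).choose (j + 1) : ℚ)) = (m.choose j : ℚ) + (m.choose (j + 1) : ℚ) := by
    rw [Nat.choose_succ_succ]; push_cast; ring
  have hc : ((m - j : ℕ) : ℚ) = (m : ℚ) - j := by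
    rw [Nat.cast_sub hj]
  have hf : ((j + 1).factorial : ℚ) = ((j : ℚ) + 1) * (j.factorial : ℚ) := by
    rw [Nat.factorial_succ]; push_cast; ring
  rw [cc, cc, cc, hp, hc, hf]
  linear_combination (2 * (m.choose j : ℚ) * (j.factorial : ℚ)) * h1

private lemma Rp_eq (m : ℕ) :
    Rp m = ∑ j ∈ Finset.range (m + 1), C (cc m j) * Fp (m - j) := by
  induction m with
  | zero => simp [Rp, Fp, cc]
  | succ m ih =>
    have hstep : Rp (m + 1) = Rp m * (X + (m : ℚ[X]) + 1) := by
      rw [Rp, Rp, Finset.prod_range_succ]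
    rw [hstep, ih, Finset.sum_mul]
    have hterm : ∀ j ∈ Finset.range (m + 1),
        C (cc m j) * Fp (m - j) * (X + (m : ℚ[X]) + 1) =
        C (cc m j) * Fp (m - j + 1) +
          C (cc m j * (((m - j : ℕ) : ℚ) + (m : ℚ) + 1)) * Fp (m - j) := by
      intro j hj
      have : X + (m : ℚ[X]) + 1 = X + C ((m : ℚ) + 1) := by
        rw [map_add, C_eq_natCast, map_one]; ring
      rw [this, mul_add, mul_comm (C (cc m j) * Fp (m - j)) X, ← mul_assoc, mul_comm X (C (cc m j)),
        mul_assoc, mul_comm X (Fp (m - j))]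
      rw [Fp_mul_X]
      simp only [map_mul, map_add, map_natCast, map_one]
      ring
    rw [Finset.sum_congr rfl hterm, Finset.sum_add_distrib]
    -- first sum: shift index
    have hfst : ∑ j ∈ Finset.range (m + 1), C (cc m j) * Fp (m - j + 1) =
        C (cc m 0) * Fp (m + 1) + ∑ j ∈ Finset.range (m + 1), C (cc m (j + 1)) * Fp (m - j) := by
      rw [Finset.sum_range_succ' (fun j => C (cc m j) * Fp (m - j + 1)) m]
      have : ∑ j ∈ Finset.range m, C (cc m (j + 1)) * Fp (m - (j + 1) + 1) =
          ∑ j ∈ Finset.range (m + 1), C (cc m (j + 1)) * Fp (m - j) := by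
        rw [Finset.sum_range_succ]
        have hz : cc m (m + 1) = 0 := by simp [cc, Nat.choose_eq_zero_of_lt]
        rw [hz]
        simp only [map_zero, zero_mul, add_zero]
        apply Finset.sum_congr rfl
        intro j hj
        have hjm : j < m := Finset.mem_range.mp hj
        congr 2
        omega
      rw [this]
      have hz2 : m - 0 + 1 = m + 1 := by omega
      rw [hz2]
      rw [add_comm]
    rw [hfst]
    -- RHS: peel j = 0
    rw [Finset.sum_range_succ' (fun j => C (cc (m + 1) j) * Fp (m + 1 - j)) (m + 1)]
    have h0 : cc (m + 1) 0 = cc m 0 := by simp [cc]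
    have hrest : ∀ j ∈ Finset.range (m + 1),
        C (cc (m + 1) (j + 1)) * Fp (m + 1 - (j + 1)) =
          C (cc m (j + 1)) * Fp (m - j) + C (cc m j * (((m - j : ℕ) : ℚ) + (m : ℚ) + 1)) * Fp (m - j) := by
      intro j hj
      have hjm : j ≤ m := Nat.lt_succ_iff.mp (Finset.mem_range.mp hj)
      have : m + 1 - (j + 1) = m - j := by omega
      rw [this, cc_rec m j hjm, map_add]
      ring
    rw [Finset.sum_congr rfl hrest, Finset.sum_add_distrib, h0]
    simp only [Nat.sub_zero]
    ring

private lemma core (m : ℕ) :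
    ∑ k ∈ Finset.range (m + 1), (-1 : ℚ) ^ k * k * (m.choose k : ℚ) * 2 ^ (m - k) = -m := by
  cases m with
  | zero => simp
  | succ m =>
    rw [Finset.sum_range_succ' (fun k => (-1 : ℚ) ^ k * k * ((m + 1).choose k : ℚ) * 2 ^ (m + 1 - k)) (m + 1)]
    simp only [Nat.cast_zero, mul_zero, zero_mul, pow_zero, one_mul, add_zero]
    have hterm : ∀ k ∈ Finset.range (m + 1),
        (-1 : ℚ) ^ (k + 1) * (k + 1 : ℕ) * ((m + 1).choose (k + 1) : ℚ) * 2 ^ (m + 1 - (k + 1)) =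
        (-(m + 1) : ℚ) * ((-1) ^ k * 2 ^ (m - k) * (m.choose k : ℚ)) := by
      intro k hk
      have h := Nat.add_one_mul_choose_eq m k
      have h' : ((m : ℚ) + 1) * (m.choose k : ℚ) = (((m + 1).choose (k + 1) : ℕ) : ℚ) * ((k : ℚ) + 1) := by
        exact_mod_cast h
      have hs : m + 1 - (k + 1) = m - k := by omega
      rw [hs, pow_succ]
      push_cast
      linear_combination ((-1 : ℚ) ^ k * 2 ^ (m - k)) * h'
    rw [Finset.sum_congr rfl hterm, ← Finset.mul_sum]
    have hb : ∑ k ∈ Finset.range (m + 1), (-1 : ℚ) ^ k * 2 ^ (m - k) * (m.choose k : ℚ) = 1 := by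
      have := add_pow (-1 : ℚ) 2 m
      norm_num at this
      rw [← this]
    rw [hb]
    push_cast
    ring

private lemma aa_eq_kappa (n d : ℕ) (hd : d ≤ n) :
    aa n (n - d) = ((n.factorial : ℚ) ^ 2 / ((d.factorial : ℚ) ^ 2 * ((n - d).factorial : ℚ) * 2 ^ (n - d - 1))) * ((n - d : ℕ) : ℚ) := by
  set m := n - d with hm
  have hmn : m ≤ n := Nat.sub_le n d
  have hnm : n - m = d := by omega
  have hch : (n.choose m : ℚ) = (n.factorial : ℚ) / ((m.factorial : ℚ) * (d.factorial : ℚ)) := by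
    rw [Nat.cast_choose ℚ hmn, hnm]
  rw [aa, hch]
  have h2 : (2 : ℚ) ^ (m - 1) ≠ 0 := by positivity
  have hf1 : (m.factorial : ℚ) ≠ 0 := Nat.cast_ne_zero.mpr (Nat.factorial_ne_zero m)
  have hf2 : (d.factorial : ℚ) ≠ 0 := Nat.cast_ne_zero.mpr (Nat.factorial_ne_zero d)
  field_simp

private lemma term_eq_kappa (n d k : ℕ) (hd : d ≤ n) (hk : k ≤ n - d) :
    (-1 : ℚ) ^ k * aa n k * cc (n - k) (n - k - d) =
    ((n.factorial : ℚ) ^ 2 / ((d.factorial : ℚ) ^ 2 * ((n - d).factorial : ℚ) * 2 ^ (n - d - 1))) *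
      ((-1 : ℚ) ^ k * k * ((n - d).choose k : ℚ) * 2 ^ (n - d - k)) := by
  set m := n - d with hm
  rcases Nat.eq_zero_or_pos k with hk0 | hk1
  · subst hk0; simp [aa]
  -- k ≥ 1
  have hkn : k ≤ n := le_trans hk (Nat.sub_le n d)
  have hmn : m ≤ n := Nat.sub_le n d
  have h1 : n - k - d = m - k := by omega
  have h2 : m - k ≤ n - k := by omega
  have h3 : (n - k) - (m - k) = d := by omega
  rw [h1, aa, cc]
  have hch1 : (n.choose k : ℚ) = (n.factorial : ℚ) / ((k.factorial : ℚ) * ((n - k).factorial : ℚ)) := by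
    rw [Nat.cast_choose ℚ hkn]
  have hch2 : ((n - k).choose (m - k) : ℚ) =
      ((n - k).factorial : ℚ) / (((m - k).factorial : ℚ) * ((d).factorial : ℚ)) := by
    rw [Nat.cast_choose ℚ h2, h3]
  have hch3 : ((m).choose k : ℚ) = ((m).factorial : ℚ) / ((k.factorial : ℚ) * ((m - k).factorial : ℚ)) := by
    rw [Nat.cast_choose ℚ hk]
  have hpow : (2 : ℚ) ^ (m - 1) = 2 ^ (k - 1) * 2 ^ (m - k) := by
    rw [← pow_add]; congr 1; omega
  rw [hch1, hch2, hch3, hpow]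
  have e1 : ((k.factorial : ℚ)) ≠ 0 := Nat.cast_ne_zero.mpr (Nat.factorial_ne_zero k)
  have e2 : (((n - k).factorial : ℚ)) ≠ 0 := Nat.cast_ne_zero.mpr (Nat.factorial_ne_zero _)
  have e3 : (((m - k).factorial : ℚ)) ≠ 0 := Nat.cast_ne_zero.mpr (Nat.factorial_ne_zero _)
  have e4 : ((d.factorial : ℚ)) ≠ 0 := Nat.cast_ne_zero.mpr (Nat.factorial_ne_zero d)
  have e5 : (((m).factorial : ℚ)) ≠ 0 := Nat.cast_ne_zero.mpr (Nat.factorial_ne_zero _)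
  have e6 : (2 : ℚ) ^ (k - 1) ≠ 0 := by positivity
  have e7 : (2 : ℚ) ^ (m - k) ≠ 0 := by positivity
  field_simp

private lemma key (n d : ℕ) (hd : d ≤ n) :
    aa n (n - d) + ∑ k ∈ Finset.range (n - d + 1),
      (-1 : ℚ) ^ k * aa n k * cc (n - k) (n - k - d) = 0 := by
  set m := n - d with hm
  set κ : ℚ := (n.factorial : ℚ) ^ 2 / ((d.factorial : ℚ) ^ 2 * ((m).factorial : ℚ) * 2 ^ (m - 1)) with hκ
  have hsum : ∑ k ∈ Finset.range (m + 1), (-1 : ℚ) ^ k * aa n k * cc (n - k) (n - k - d) =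
      κ * ∑ k ∈ Finset.range (m + 1), ((-1 : ℚ) ^ k * k * ((m).choose k : ℚ) * 2 ^ (m - k)) := by
    rw [Finset.mul_sum]
    apply Finset.sum_congr rfl
    intro k hk
    exact term_eq_kappa n d k hd (Nat.lt_succ_iff.mp (Finset.mem_range.mp hk))
  rw [hsum, core, aa_eq_kappa n d hd]
  ring

open Finset in
theorem sum_vanishes (n : ℕ) :
    ∑ k ∈ Finset.range (n + 1),
      C ((k.factorial * k : ℚ) / 2 ^ (k - 1) * (n.choose k : ℚ) ^ 2) *
        (∏ j ∈ Finset.range (n - k), (X - (j : ℚ[X])) +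
          (-1) ^ k * ∏ j ∈ Finset.range (n - k), (X + (j : ℚ[X]) + 1)) = 0 := by
  have hneg : ∀ k : ℕ, ((-1 : ℚ[X])) ^ k = C ((-1 : ℚ) ^ k) := by
    intro k; rw [map_pow, map_neg, map_one]
  have step1 : ∑ k ∈ Finset.range (n + 1),
      C ((k.factorial * k : ℚ) / 2 ^ (k - 1) * (n.choose k : ℚ) ^ 2) *
        (∏ j ∈ Finset.range (n - k), (X - (j : ℚ[X])) +
          (-1) ^ k * ∏ j ∈ Finset.range (n - k), (X + (j : ℚ[X]) + 1)) =
      ∑ k ∈ Finset.range (n + 1), (C (aa n k) * Fp (n - k) +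
        C ((-1 : ℚ) ^ k * aa n k) * Rp (n - k)) := by
    apply Finset.sum_congr rfl
    intro k _
    rw [Fp, Rp, aa, hneg k]
    simp only [map_mul, map_div₀, map_pow, map_natCast, map_ofNat, map_neg, map_one]
    ring
  rw [step1, Finset.sum_add_distrib]
  -- first sum: reflect
  have hfst : ∑ k ∈ Finset.range (n + 1), C (aa n k) * Fp (n - k) =
      ∑ d ∈ Finset.range (n + 1), C (aa n (n - d)) * Fp d := by
    rw [← Finset.sum_range_reflect (fun d => C (aa n (n - d)) * Fp d) (n + 1)]
    apply Finset.sum_congr rfl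
    intro k hk
    have hkn : k ≤ n := Nat.lt_succ_iff.mp (Finset.mem_range.mp hk)
    simp only [Nat.add_sub_cancel]
    rw [Nat.sub_sub_self hkn]
  -- second sum: expand R and reflect inner sum
  have hsnd : ∑ k ∈ Finset.range (n + 1), C ((-1 : ℚ) ^ k * aa n k) * Rp (n - k) =
      ∑ k ∈ Finset.range (n + 1), ∑ d ∈ Finset.range (n - k + 1),
        C ((-1 : ℚ) ^ k * aa n k * cc (n - k) (n - k - d)) * Fp d := by
    apply Finset.sum_congr rfl
    intro k hk
    rw [Rp_eq, Finset.mul_sum]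
    rw [← Finset.sum_range_reflect
      (fun d => C ((-1 : ℚ) ^ k * aa n k * cc (n - k) (n - k - d)) * Fp d) (n - k + 1)]
    apply Finset.sum_congr rfl
    intro j hj
    have hjk : j ≤ n - k := Nat.lt_succ_iff.mp (Finset.mem_range.mp hj)
    simp only [Nat.add_sub_cancel]
    rw [Nat.sub_sub_self hjk]
    simp only [map_mul]
    ring
  rw [hfst, hsnd]
  -- swap the double sum
  have hswap : ∑ k ∈ Finset.range (n + 1), ∑ d ∈ Finset.range (n - k + 1),
        C ((-1 : ℚ) ^ k * aa n k * cc (n - k) (n - k - d)) * Fp d =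
      ∑ d ∈ Finset.range (n + 1), ∑ k ∈ Finset.range (n - d + 1),
        C ((-1 : ℚ) ^ k * aa n k * cc (n - k) (n - k - d)) * Fp d := by
    apply Finset.sum_comm'
    intro k d
    simp only [Finset.mem_range]
    omega
  rw [hswap, ← Finset.sum_add_distrib]
  apply Finset.sum_eq_zero
  intro d hd
  have hdn : d ≤ n := Nat.lt_succ_iff.mp (Finset.mem_range.mp hd)
  have : C (aa n (n - d)) * Fp d + ∑ k ∈ Finset.range (n - d + 1),
      C ((-1 : ℚ) ^ k * aa n k * cc (n - k) (n - k - d)) * Fp d =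
      C (aa n (n - d) + ∑ k ∈ Finset.range (n - d + 1),
        (-1 : ℚ) ^ k * aa n k * cc (n - k) (n - k - d)) * Fp d := by
    rw [map_add, map_sum, add_mul, Finset.sum_mul]
  rw [this, key n d hdn, map_zero, zero_mul]
end

section
/- For every natural number n ≥ 1, Σ_{k=0}^n (k!·(n-k)/2^k) · C(n,k)^2 · ( N^{↓(n-k-1)} - (-1)^k (N+n-k)^{↓(n-k-1)} ) = 0 as a polynomial identity in N. -/
/-!
Put `a k = k! C(n,k)² / 2^k`. The identity
`∑ₖ a k • Y^{↓(n-k)} = ∑ₖ (-1)^k a k • (Y + (n - k))^{↓(n-k)}` holds for every `Y`: expanding the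
right side by Chu–Vandermonde, the coefficient of `Y^{↓j}` is `a (n - j)` times
`2^{n-j} ∑ₖ C(n-j,k) (-1/2)^k = 1`. The theorem is the forward difference of this identity in `Y`,
because `(Y + 1)^{↓m} - Y^{↓m} = m Y^{↓(m-1)}`.
-/

open Polynomial Finset Nat

theorem Nat.choose_mul_choose_sub_comm (n k j : ℕ) :
    n.choose k * (n - k).choose j = n.choose j * (n - j).choose k := by
  have hk := Nat.choose_mul (n := n) (Nat.le_add_right k j)
  have hj := Nat.choose_mul (n := n) (Nat.le_add_left j k)
  rw [Nat.add_sub_cancel_left] at hk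
  rw [Nat.add_sub_cancel] at hj
  rw [← hk, ← hj, choose_symm_add]

theorem Nat.factorial_mul_choose_sq_mul_choose_mul_descFactorial {n k j : ℕ} (h : k + j ≤ n) :
    k ! * n.choose k ^ 2 * ((n - k).choose j * (n - k).descFactorial (n - k - j)) =
      (n - j)! * n.choose j ^ 2 * (n - j).choose k := by
  have hdesc : (n - k).descFactorial (n - k - j) = (n - j - k)! * (n - k).choose j := by
    rw [descFactorial_eq_factorial_mul_choose, choose_symm (by omega), Nat.sub_right_comm]
  have hfact := choose_mul_factorial_mul_factorial (show k ≤ n - j by omega)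
  calc k ! * n.choose k ^ 2 * ((n - k).choose j * (n - k).descFactorial (n - k - j))
      = (n.choose k * (n - k).choose j) ^ 2 * k ! * (n - j - k)! := by rw [hdesc]; ring
    _ = (n.choose j * (n - j).choose k) ^ 2 * k ! * (n - j - k)! := by
      rw [Nat.choose_mul_choose_sub_comm]
    _ = (n - j)! * n.choose j ^ 2 * (n - j).choose k := by rw [← hfact]; ring

noncomputable def weight (n k : ℕ) : ℚ := k ! * n.choose k ^ 2 / 2 ^ k

theorem sum_neg_one_pow_mul_weight {n j : ℕ} (hj : j ≤ n) :
    ∑ k ∈ range (n - j + 1),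
      (-1) ^ k * weight n k * ((n - k).choose j * (n - k).descFactorial (n - k - j) : ℕ) =
      weight n (n - j) := by
  have hterm : ∀ k ∈ range (n - j + 1),
      (-1) ^ k * weight n k * ((n - k).choose j * (n - k).descFactorial (n - k - j) : ℕ) =
        (n - j)! * n.choose j ^ 2 * ((-1 / 2) ^ k * 1 ^ (n - j - k) * (n - j).choose k) := by
    intro k hk
    have h := Nat.factorial_mul_choose_sq_mul_choose_mul_descFactorial
      (show k + j ≤ n by rw [mem_range] at hk; omega)
    have hq := congrArg (Nat.cast : ℕ → ℚ) h
    rw [weight, one_pow, mul_one, div_pow]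
    push_cast at hq ⊢
    field_simp
    linear_combination hq
  rw [sum_congr rfl hterm, ← mul_sum, ← add_pow, weight, choose_symm hj,
    show (-1 / 2 + 1 : ℚ) = 2⁻¹ by norm_num, inv_pow, div_eq_mul_inv]

section FallingFactorial

variable {R : Type*} [Ring R]

theorem descPochhammer_smeval_add_natCast (r : R) (c m : ℕ) :
    (descPochhammer ℤ m).smeval (r + c) =
      ∑ i ∈ range (m + 1),
        (m.choose i * c.descFactorial (m - i)) • (descPochhammer ℤ i).smeval r := by
  rw [Ring.descPochhammer_smeval_add m (Nat.cast_commute c r).symm,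
    Nat.sum_antidiagonal_eq_sum_range_succ (fun i j => (m.choose i : R) *
      ((descPochhammer ℤ i).smeval r * (descPochhammer ℤ j).smeval (c : R)))]
  refine sum_congr rfl fun i _ => ?_
  rw [descPochhammer_smeval_eq_descFactorial, mul_nsmul', ← Nat.cast_comm, nsmul_eq_mul,
    nsmul_eq_mul]

theorem descPochhammer_smeval_add_one_sub (r : R) (m : ℕ) :
    (descPochhammer ℤ m).smeval (r + 1) - (descPochhammer ℤ m).smeval r =
      m • (descPochhammer ℤ (m - 1)).smeval r := by
  cases m with
  | zero => simp
  | succ m => rw [Ring.descPochhammer_succ_succ_smeval, add_sub_cancel_right, Nat.add_sub_cancel]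

theorem sum_weight_smul_descPochhammer_smeval [Module ℚ R] (n : ℕ) (r : R) :
    ∑ k ∈ range (n + 1), weight n k • (descPochhammer ℤ (n - k)).smeval r =
      ∑ k ∈ range (n + 1),
        ((-1) ^ k * weight n k) • (descPochhammer ℤ (n - k)).smeval (r + (n - k : ℕ)) := by
  simp_rw [descPochhammer_smeval_add_natCast, smul_sum, ← Nat.cast_smul_eq_nsmul ℚ, smul_smul]
  rw [sum_comm' (t' := range (n + 1)) (s' := fun i => range (n - i + 1))
    (by intro k i; simp only [mem_range]; omega)]
  simp_rw [← sum_smul]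
  rw [← sum_range_reflect]
  refine sum_congr rfl fun i hi => ?_
  rw [mem_range] at hi
  rw [sum_neg_one_pow_mul_weight (by omega), Nat.add_sub_cancel, Nat.sub_sub_self (by omega)]

end FallingFactorial

theorem descPochhammer_smeval_eq_prod_range {R : Type*} [CommRing R] (m : ℕ) (r : R) :
    (descPochhammer ℤ m).smeval r = ∏ j ∈ range m, (r - j) := by
  rw [← descPochhammer_eval_eq_prod_range, ← descPochhammer_map (algebraMap ℤ R),
    eval_map_algebraMap, aeval_eq_smeval]

theorem sum_vanishes'_general (n : ℕ) :
    ∑ k ∈ Finset.range (n + 1),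
      C (((k.factorial * (n - k) : ℕ) : ℚ) / 2 ^ k) * ((n.choose k : ℚ[X])) ^ 2 *
        (∏ j ∈ Finset.range (n - k - 1), (X - (j : ℚ[X])) -
          (-1) ^ k * ∏ j ∈ Finset.range (n - k - 1), (X + ((n - k : ℕ) : ℚ[X]) - (j : ℚ[X]))) = 0 := by
  have hterm : ∀ k ∈ range (n + 1),
      C (((k ! * (n - k) : ℕ) : ℚ) / 2 ^ k) * (n.choose k : ℚ[X]) ^ 2 *
        (∏ j ∈ range (n - k - 1), (X - (j : ℚ[X])) -
          (-1) ^ k * ∏ j ∈ range (n - k - 1), (X + ((n - k : ℕ) : ℚ[X]) - (j : ℚ[X]))) =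
      (weight n k • (descPochhammer ℤ (n - k)).smeval (X + 1) -
          weight n k • (descPochhammer ℤ (n - k)).smeval X) -
        (((-1) ^ k * weight n k) • (descPochhammer ℤ (n - k)).smeval (X + 1 + (n - k : ℕ)) -
          ((-1) ^ k * weight n k) • (descPochhammer ℤ (n - k)).smeval (X + (n - k : ℕ))) := by
    intro k _
    have hcoeff : C (((k ! * (n - k) : ℕ) : ℚ) / 2 ^ k) * (n.choose k : ℚ[X]) ^ 2 =
        C (weight n k) * ((n - k : ℕ) : ℚ[X]) := by
      rw [weight, ← map_natCast C, ← map_natCast C, ← map_pow, ← map_mul, ← map_mul]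
      congr 1
      push_cast
      ring
    rw [← smul_sub, ← smul_sub, add_right_comm, descPochhammer_smeval_add_one_sub,
      descPochhammer_smeval_add_one_sub, descPochhammer_smeval_eq_prod_range,
      descPochhammer_smeval_eq_prod_range, smul_eq_C_mul, smul_eq_C_mul, nsmul_eq_mul,
      nsmul_eq_mul, hcoeff, map_mul, map_pow, map_neg, map_one]
    ring
  rw [sum_congr rfl hterm, sum_sub_distrib, sum_sub_distrib, sum_sub_distrib,
    sum_weight_smul_descPochhammer_smeval, sum_weight_smul_descPochhammer_smeval, sub_self]

theorem sum_vanishes' (n : ℕ) (hn : 1 ≤ n) :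
    ∑ k ∈ Finset.range (n + 1),
      C (((k.factorial * (n - k) : ℕ) : ℚ) / 2 ^ k) * ((n.choose k : ℚ[X])) ^ 2 *
        (∏ j ∈ Finset.range (n - k - 1), (X - (j : ℚ[X])) -
          (-1) ^ k * ∏ j ∈ Finset.range (n - k - 1), (X + ((n - k : ℕ) : ℚ[X]) - (j : ℚ[X]))) = 0 :=
  sum_vanishes'_general n
end

section
/- For every natural number n ≥ 1 and every natural number j with 0 ≤ 2j+1 ≤ n, the identity Σ_{k=0}^{2j+1} (k!/2^k) · C(n-1,k) · C(n,k) · s(n-k, n-2j-1) = 0 holds. -/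
/-!
Put `Q(x) = ∑_{b<n} C(n-1,b) (x+b)_n`, with `(y)_n` the falling factorial. Since
`(-x+b)_n = (-1)^n (x+n-1-b)_n` and `b ↦ n-1-b` preserves the weights `C(n-1,b)`, we get
`Q(-x) = (-1)^n Q(x)`, so the coefficients of `Q` in degrees `n - (2j+1)` vanish. On the other
hand, Vandermonde's identity `(x+b)_n = ∑_k C(n,k) (b)_k (x)_{n-k}` together with
`∑_b C(n-1,b) (b)_k = k! C(n-1,k) 2^(n-1-k)` expresses `Q` in the falling factorial basis;
its coefficient of `x^(n-2j-1)` is `2^(n-1)` times the sum in question. Below, `Q` is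
`binomialShiftSum (n-1) n`.
-/

/-- Signed Stirling numbers of the first kind. -/
noncomputable def stirlingFirst (n i : ℕ) : ℤ := (descPochhammer ℤ n).coeff i

open Polynomial Finset

theorem Polynomial.coeff_comp_neg_X {R : Type*} [CommRing R] (p : R[X]) (k : ℕ) :
    (p.comp (-X)).coeff k = (-1) ^ k * p.coeff k := by
  induction p using Polynomial.induction_on' with
  | add p q hp hq => simp [add_comp, hp, hq, mul_add]
  | monomial m a =>
    rw [← C_mul_X_pow_eq_monomial, mul_comp, C_comp, pow_comp, X_comp, neg_pow,
      show (-1 : R[X]) ^ m = C ((-1) ^ m) by simp, mul_left_comm, coeff_C_mul, coeff_C_mul,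
      coeff_X_pow]
    split_ifs with h
    · rw [h]
    · simp

theorem Polynomial.coeff_eq_zero_of_comp_neg_X_eq {R : Type*} [CommRing R] [NoZeroDivisors R]
    [CharZero R] {p : R[X]} {n i : ℕ} (hp : p.comp (-X) = (-1) ^ n * p) (hni : Odd (n + i)) :
    p.coeff i = 0 := by
  have h := congrArg (coeff · i) hp
  rw [coeff_comp_neg_X, show (-1 : R[X]) ^ n = C ((-1) ^ n) by simp, coeff_C_mul] at h
  rcases Nat.even_or_odd i with hi | hi
  · rw [hi.neg_one_pow, ((Nat.odd_add.1 hni).2 hi).neg_one_pow] at h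
    simpa [CharZero.eq_neg_self_iff] using h
  · rw [hi.neg_one_pow, ((Nat.odd_add'.1 hni).1 hi).neg_one_pow] at h
    simpa [CharZero.neg_eq_self_iff] using h

theorem Nat.sum_range_choose_mul_choose (m k : ℕ) :
    ∑ b ∈ range (m + 1), m.choose b * b.choose k = m.choose k * 2 ^ (m - k) := by
  obtain hkm | hmk := le_or_gt k m
  · rw [show m + 1 = k + (m - k + 1) by omega, sum_range_add,
      sum_eq_zero fun b hb => by rw [Nat.choose_eq_zero_of_lt (mem_range.1 hb), mul_zero],
      zero_add, ← Nat.sum_range_choose, mul_sum]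
    refine sum_congr rfl fun i _ => ?_
    rw [Nat.choose_mul (Nat.le_add_right k i), Nat.add_sub_cancel_left]
  · rw [Nat.choose_eq_zero_of_lt hmk, zero_mul]
    exact sum_eq_zero fun b hb => by
      rw [Nat.choose_eq_zero_of_lt (n := b) (by grind), mul_zero]

theorem descPochhammer_comp_X_add_C (n : ℕ) (a : ℤ) :
    (descPochhammer ℤ n).comp (X + C a) =
      ∑ k ∈ range (n + 1), (n.choose k * (descPochhammer ℤ k).eval a) •
        descPochhammer ℤ (n - k) := by
  rw [add_comm, comp_eq_aeval, aeval_eq_smeval, Ring.descPochhammer_smeval_add n (Commute.all _ _),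
    Nat.sum_antidiagonal_eq_sum_range_succ_mk]
  refine sum_congr rfl fun k _ => ?_
  rw [← aeval_eq_smeval, ← aeval_eq_smeval, ← comp_eq_aeval, ← comp_eq_aeval, comp_C, comp_X,
    smul_eq_C_mul]
  simp [mul_assoc]

theorem descPochhammer_comp_neg_X_add_C (n : ℕ) (c : ℤ) :
    (descPochhammer ℤ n).comp (-X + C c) =
      (-1) ^ n * (descPochhammer ℤ n).comp (X + C (n - 1 - c)) := by
  refine Polynomial.funext fun x => ?_
  simp only [eval_comp, eval_mul, eval_pow, eval_neg, eval_one, eval_add, eval_X, eval_C]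
  rw [descPochhammer_eval_eq_ascPochhammer, show -x + c - n + 1 = -(x + (n - 1 - c)) by ring,
    ascPochhammer_eval_neg_eq_descPochhammer]

noncomputable def binomialShiftSum (m n : ℕ) : ℤ[X] :=
  ∑ b ∈ range (m + 1), (m.choose b : ℤ) • (descPochhammer ℤ n).comp (X + C (b : ℤ))

theorem binomialShiftSum_comp_neg_X (m : ℕ) :
    (binomialShiftSum m (m + 1)).comp (-X) = (-1) ^ (m + 1) * binomialShiftSum m (m + 1) := by
  rw [binomialShiftSum, Polynomial.sum_comp, mul_sum, ← sum_range_reflect _ (m + 1)]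
  refine sum_congr rfl fun b hb => ?_
  have hb : b ≤ m := Nat.lt_succ_iff.1 (mem_range.1 hb)
  rw [smul_comp, comp_assoc, add_comp, X_comp, C_comp, descPochhammer_comp_neg_X_add_C,
    Nat.add_sub_cancel, Nat.choose_symm (by omega), Nat.cast_sub (by omega), mul_smul_comm]
  push_cast
  ring_nf

theorem binomialShiftSum_eq_sum (m n : ℕ) :
    binomialShiftSum m n = ∑ k ∈ range (n + 1),
      (n.choose k * k.factorial * m.choose k * 2 ^ (m - k) : ℤ) • descPochhammer ℤ (n - k) := by
  simp only [binomialShiftSum, descPochhammer_comp_X_add_C, smul_sum, smul_smul]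
  rw [sum_comm]
  refine sum_congr rfl fun k _ => ?_
  rw [← sum_smul]
  congr 1
  calc ∑ b ∈ range (m + 1), (m.choose b : ℤ) * (n.choose k * (descPochhammer ℤ k).eval (b : ℤ))
      = n.choose k * k.factorial * ((∑ b ∈ range (m + 1), m.choose b * b.choose k : ℕ) : ℤ) := by
        push_cast
        rw [mul_sum]
        refine sum_congr rfl fun b _ => ?_
        rw [descPochhammer_eval_eq_descFactorial, Nat.descFactorial_eq_factorial_mul_choose]
        push_cast
        ring
    _ = n.choose k * k.factorial * m.choose k * 2 ^ (m - k) := by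
        rw [Nat.sum_range_choose_mul_choose]
        push_cast
        ring

theorem sum_choose_mul_stirlingFirst_eq_zero {m i : ℕ} (hmi : Even (m + i)) :
    ∑ k ∈ range (m + 2), ((m + 1).choose k * k.factorial * m.choose k * 2 ^ (m - k) : ℤ) *
      stirlingFirst (m + 1 - k) i = 0 := by
  rw [← coeff_eq_zero_of_comp_neg_X_eq (binomialShiftSum_comp_neg_X m) (i := i)
      (by rw [add_right_comm]; exact hmi.add_one),
    binomialShiftSum_eq_sum, finsetSum_coeff]
  simp only [coeff_smul, smul_eq_mul, stirlingFirst]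

theorem stirlingFirst_eq_zero_of_lt {n i : ℕ} (h : n < i) : stirlingFirst n i = 0 :=
  coeff_eq_zero_of_natDegree_lt (by rwa [descPochhammer_natDegree])

theorem factorial_div_two_pow_mul_choose (m k : ℕ) :
    (k.factorial : ℚ) / 2 ^ k * m.choose k =
      (2 ^ m)⁻¹ * (k.factorial * m.choose k * 2 ^ (m - k)) := by
  rcases le_or_gt k m with hk | hk
  · obtain ⟨d, rfl⟩ := Nat.exists_eq_add_of_le hk
    rw [Nat.add_sub_cancel_left, pow_add]
    field_simp
  · simp [Nat.choose_eq_zero_of_lt hk]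

theorem stirling_relation_general (n j : ℕ) (hj : 2 * j + 1 ≤ n) :
    ∑ k ∈ Finset.range (2 * j + 2),
      (k.factorial : ℚ) / 2 ^ k * ((n - 1).choose k : ℚ) * (n.choose k : ℚ) *
        (stirlingFirst (n - k) (n - (2 * j + 1)) : ℚ) = 0 := by
  obtain ⟨m, rfl⟩ : ∃ m, n = m + 1 := ⟨n - 1, by omega⟩
  have hmi : Even (m + (m + 1 - (2 * j + 1))) := ⟨m - j, by omega⟩
  rw [Nat.add_sub_cancel, sum_subset (range_subset_range.2 (by omega : 2 * j + 2 ≤ m + 2))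
    fun k _ hk => by
      rw [stirlingFirst_eq_zero_of_lt (by grind), Int.cast_zero, mul_zero]]
  calc _ = (2 ^ m)⁻¹ * ((∑ k ∈ range (m + 2), ((m + 1).choose k * k.factorial * m.choose k *
        2 ^ (m - k) : ℤ) * stirlingFirst (m + 1 - k) (m + 1 - (2 * j + 1)) : ℤ) : ℚ) := by
        push_cast
        rw [mul_sum]
        refine sum_congr rfl fun k _ => ?_
        rw [factorial_div_two_pow_mul_choose]
        ring
    _ = 0 := by rw [sum_choose_mul_stirlingFirst_eq_zero hmi, Int.cast_zero, mul_zero]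

theorem stirling_relation (n j : ℕ) (hn : 1 ≤ n) (hj : 2 * j + 1 ≤ n) :
    ∑ k ∈ Finset.range (2 * j + 2),
      (k.factorial : ℚ) / 2 ^ k * ((n - 1).choose k : ℚ) * (n.choose k : ℚ) *
        (stirlingFirst (n - k) (n - (2 * j + 1)) : ℚ) = 0 :=
  stirling_relation_general n j hj
end

section
/- With α(n,i) = (1/2) Σ_{k=0}^{i} (k!/2^k) C(n,k) C(n-1,k) s(n-k, n-i), one has α(n,4) = n(n-1)(n-2)(n-3)(n-4)(5n-7)/2880 for all n ≥ 1. -/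
/-- The coefficients `α(n,i)` of the symmetric Weyl-ordering expression. -/
noncomputable def alpha (n i : ℕ) : ℚ :=
  (1 / 2) * ∑ k ∈ Finset.range (i + 1),
    (k.factorial : ℚ) / 2 ^ k * (n.choose k : ℚ) * ((n - 1).choose k : ℚ) *
      (stirlingFirst (n - k) (n - i) : ℚ)

lemma st_rec (m l : ℕ) :
    stirlingFirst (m + 1) (l + 1) = stirlingFirst m l - m * stirlingFirst m (l + 1) := by
  simp only [stirlingFirst, descPochhammer_succ_right, mul_sub, Polynomial.coeff_sub,
    Polynomial.coeff_mul_X]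
  congr 1
  rw [← Polynomial.C_eq_natCast, Polynomial.coeff_mul_C, mul_comm]

lemma st_diag (m : ℕ) : stirlingFirst m m = 1 := by
  have h := (monic_descPochhammer ℤ m).coeff_natDegree
  rwa [descPochhammer_natDegree] at h

lemma st_zero (m : ℕ) : stirlingFirst (m + 1) 0 = 0 := by
  simp [stirlingFirst, descPochhammer_succ_left, Polynomial.mul_coeff_zero]

lemma s1 (m : ℕ) : (stirlingFirst (m + 1) m : ℚ) = -(((m : ℚ) + 1) * m) / 2 := by
  induction m with
  | zero => simp [st_zero]
  | succ m ih =>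
    rw [st_rec (m + 1) m]
    push_cast [ih, st_diag]
    ring

lemma s2 (m : ℕ) : (stirlingFirst (m + 2) m : ℚ) =
    ((m : ℚ) + 2) * ((m : ℚ) + 1) * (m : ℚ) * (3 * (m : ℚ) + 5) / 24 := by
  induction m with
  | zero => simp [show (2 : ℕ) = 1 + 1 from rfl, st_zero]
  | succ m ih =>
    rw [show m + 1 + 2 = (m + 2) + 1 from rfl, st_rec (m + 2) m]
    have h1 : (stirlingFirst (m + 2) (m + 1) : ℚ) = -(((m : ℚ) + 2) * ((m : ℚ) + 1)) / 2 := by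
      have := s1 (m + 1); push_cast at this ⊢; linarith
    push_cast [ih, h1]
    ring

lemma s3 (m : ℕ) : (stirlingFirst (m + 3) m : ℚ) =
    -(((m : ℚ) + 3) ^ 2 * ((m : ℚ) + 2) ^ 2 * ((m : ℚ) + 1) * (m : ℚ)) / 48 := by
  induction m with
  | zero => simp [show (3 : ℕ) = 2 + 1 from rfl, st_zero]
  | succ m ih =>
    rw [show m + 1 + 3 = (m + 3) + 1 from rfl, st_rec (m + 3) m]
    have h1 : (stirlingFirst (m + 3) (m + 1) : ℚ) =
        ((m : ℚ) + 3) * ((m : ℚ) + 2) * ((m : ℚ) + 1) * (3 * (m : ℚ) + 8) / 24 := by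
      have := s2 (m + 1); push_cast at this ⊢; linarith
    push_cast [ih, h1]
    ring

lemma s4 (m : ℕ) : (stirlingFirst (m + 4) m : ℚ) =
    ((m : ℚ) + 4) * ((m : ℚ) + 3) * ((m : ℚ) + 2) * ((m : ℚ) + 1) * (m : ℚ) *
      (15 * ((m : ℚ) + 4) ^ 3 - 30 * ((m : ℚ) + 4) ^ 2 + 5 * ((m : ℚ) + 4) + 2) / 5760 := by
  induction m with
  | zero => simp [show (4 : ℕ) = 3 + 1 from rfl, st_zero]
  | succ m ih =>
    rw [show m + 1 + 4 = (m + 4) + 1 from rfl, st_rec (m + 4) m]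
    have h1 : (stirlingFirst (m + 4) (m + 1) : ℚ) =
        -(((m : ℚ) + 4) ^ 2 * ((m : ℚ) + 3) ^ 2 * ((m : ℚ) + 2) * ((m : ℚ) + 1)) / 48 := by
      have := s3 (m + 1); push_cast at this ⊢; linarith
    push_cast [ih, h1]
    ring

lemma c3 (m : ℕ) : (m.choose 3 : ℚ) = (m : ℚ) * ((m : ℚ) - 1) * ((m : ℚ) - 2) / 6 := by
  induction m with
  | zero => simp
  | succ m ih =>
    rw [Nat.choose_succ_succ]
    push_cast [Nat.cast_choose_two, ih]
    ring

lemma c4 (m : ℕ) : (m.choose 4 : ℚ) = (m : ℚ) * ((m : ℚ) - 1) * ((m : ℚ) - 2) * ((m : ℚ) - 3) / 24 := by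
  induction m with
  | zero => simp
  | succ m ih =>
    rw [Nat.choose_succ_succ]
    push_cast [c3, ih]
    ring

theorem alpha_four (n : ℕ) (hn : 1 ≤ n) :
    alpha n 4 = (n : ℚ) * ((n : ℚ) - 1) * ((n : ℚ) - 2) * ((n : ℚ) - 3) * ((n : ℚ) - 4) *
      (5 * (n : ℚ) - 7) / 2880 := by
  rcases le_or_gt n 4 with h | h
  · interval_cases n <;>
      norm_num [alpha, Finset.sum_range_succ, stirlingFirst, descPochhammer, Nat.choose,
        Nat.factorial]
  · obtain ⟨m, rfl⟩ : ∃ m, n = m + 5 := ⟨n - 5, by omega⟩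
    simp only [alpha, Finset.sum_range_succ, Finset.sum_range_zero,
      show m + 5 - 0 = (m + 1) + 4 from rfl, show m + 5 - 1 = (m + 1) + 3 by omega,
      show m + 5 - 2 = (m + 1) + 2 by omega, show m + 5 - 3 = (m + 1) + 1 by omega,
      show m + 5 - 4 = m + 1 by omega, s4, s3, s2, s1, st_diag,
      Nat.cast_choose_two, c3, c4, Nat.choose_one_right, Nat.choose_zero_right]
    push_cast
    norm_num [Nat.factorial]
    ring
end

section
/- For every natural number n, the polynomial p_n(N) = Σ_{k=0}^n k! s^k C(n,k)^2 (N+ε)^{↑(n-k)} satisfies (Δ₊^{n-l} p_n)(0) = l! C(n,l) (n!/l!) (s+ε)^l for every 0 ≤ l ≤ n, where Δ₊ is the forward difference with increment ε. -/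
/-!
With `R_c(m) = (N + c)(N + c + ε)⋯(N + c + (m-1)ε)`, shifting `N ↦ N + ε` turns `R_c(m+1)` into
`R_{c+ε}(m+1)`, whose first `m` factors are those of `R_c(m+1)` after its first one; hence
`Δ₊ R_c(m+1) = (m+1) R_{c+ε}(m)`, and `Δ₊^j R_c(m) = m^{↓j} R_{c+jε}(m-j)` (zero for `j > m`).
Evaluating at `0`, the `k`-th term of `p_n` contributes
`k! s^k C(n,k)² (n-k)!² / ((l-k)! (n-l)!) ε^{l-k} = C(n,l) n! C(l,k) s^k ε^{l-k}`,
and the binomial theorem sums these to `C(n,l) n! (s+ε)^l`.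
-/

open Polynomial

/-- Forward difference operator with increment `ε`. -/
noncomputable def fdiff (ε : ℚ) (p : ℚ[X]) : ℚ[X] := C ε⁻¹ * (p.comp (X + C ε) - p)

open Finset

noncomputable def fdiffLinear (ε : ℚ) : Module.End ℚ ℚ[X] where
  toFun := fdiff ε
  map_add' p q := by simp only [fdiff, add_comp]; ring
  map_smul' c p := by simp only [fdiff, smul_eq_C_mul, mul_comp, C_comp, RingHom.id_apply]; ring

theorem iterate_fdiff_eq (ε : ℚ) (j : ℕ) : (fdiff ε)^[j] = ⇑(fdiffLinear ε ^ j) :=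
  (Module.End.coe_pow (fdiffLinear ε) j).symm

theorem iterate_fdiff_C_mul (ε c : ℚ) (j : ℕ) (p : ℚ[X]) :
    (fdiff ε)^[j] (C c * p) = C c * (fdiff ε)^[j] p := by
  simp only [iterate_fdiff_eq, ← smul_eq_C_mul, map_smul]

theorem iterate_fdiff_sum {ι : Type*} (ε : ℚ) (j : ℕ) (t : Finset ι) (f : ι → ℚ[X]) :
    (fdiff ε)^[j] (∑ i ∈ t, f i) = ∑ i ∈ t, (fdiff ε)^[j] (f i) := by
  simp only [iterate_fdiff_eq, map_sum]

/-- `(X + c)(X + c + ε)⋯(X + c + (m-1)ε)`; the paper's `(N + ε)^{↑m}` is `risingProd ε ε m`. -/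
noncomputable def risingProd (ε c : ℚ) (m : ℕ) : ℚ[X] := ∏ i ∈ range m, (X + C (c + i * ε))

section risingProd

variable {ε : ℚ}

theorem risingProd_zero (c : ℚ) : risingProd ε c 0 = 1 := prod_range_zero _

theorem risingProd_succ (c : ℚ) (m : ℕ) :
    risingProd ε c (m + 1) = (X + C c) * risingProd ε (c + ε) m := by
  simp only [risingProd, prod_range_succ', Nat.cast_add, Nat.cast_one, Nat.cast_zero, zero_mul,
    add_zero]
  rw [mul_comm]
  congr 1
  refine prod_congr rfl fun i _ => ?_
  congr 2
  ring

theorem risingProd_succ' (c : ℚ) (m : ℕ) :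
    risingProd ε c (m + 1) = risingProd ε c m * (X + C (c + m * ε)) :=
  prod_range_succ _ m

theorem risingProd_comp_X_add_C (c : ℚ) (m : ℕ) :
    (risingProd ε c m).comp (X + C ε) = risingProd ε (c + ε) m := by
  simp only [risingProd, Polynomial.prod_comp, add_comp, X_comp, C_comp, add_assoc, ← C_add]
  refine prod_congr rfl fun i _ => ?_
  congr 2
  ring

theorem eval_zero_risingProd (c : ℚ) (m : ℕ) :
    (risingProd ε c m).eval 0 = ∏ i ∈ range m, (c + i * ε) := by
  simp [risingProd, eval_prod]

theorem fdiff_risingProd_succ (hε : ε ≠ 0) (c : ℚ) (m : ℕ) :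
    fdiff ε (risingProd ε c (m + 1)) = C ((m : ℚ) + 1) * risingProd ε (c + ε) m := by
  rw [fdiff, risingProd_comp_X_add_C, risingProd_succ' (c + ε), risingProd_succ c]
  have hC : C ε⁻¹ * C (c + ε + m * ε) - C ε⁻¹ * C c = C ((m : ℚ) + 1) := by
    rw [← C_mul, ← C_mul, ← C_sub]
    congr 1
    field_simp
    ring
  linear_combination risingProd ε (c + ε) m * hC

theorem iterate_fdiff_risingProd (hε : ε ≠ 0) (j : ℕ) :
    ∀ (c : ℚ) (m : ℕ), (fdiff ε)^[j] (risingProd ε c m) =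
      C (m.descFactorial j : ℚ) * risingProd ε (c + j * ε) (m - j) := by
  induction j with
  | zero => simp
  | succ j ih =>
    rintro c (_ | m)
    · simp [risingProd_zero, fdiff, iterate_fdiff_eq]
    · rw [Function.iterate_succ_apply, fdiff_risingProd_succ hε, iterate_fdiff_C_mul, ih,
        ← mul_assoc, ← C_mul, Nat.succ_descFactorial_succ, Nat.add_sub_add_right]
      push_cast
      ring_nf

theorem eval_zero_iterate_fdiff_risingProd (hε : ε ≠ 0) (j m : ℕ) :
    ((fdiff ε)^[j] (risingProd ε ε m)).eval 0 =
      m.descFactorial j * (j + 1).ascFactorial (m - j) * ε ^ (m - j) := by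
  rw [iterate_fdiff_risingProd hε, eval_mul, eval_C, eval_zero_risingProd,
    Nat.ascFactorial_eq_prod_range, mul_assoc]
  push_cast
  rw [← card_range (m - j), ← prod_const, card_range, ← prod_mul_distrib]
  congr 1
  refine prod_congr rfl fun i _ => ?_
  ring

end risingProd

open Nat in
theorem factorial_mul_choose_sq_mul_descFactorial_mul_ascFactorial {n l : ℕ} (hln : l ≤ n)
    (k : ℕ) : (k ! : ℚ) * (n.choose k : ℚ) ^ 2 *
        ((n - k).descFactorial (n - l) * (n - l + 1).ascFactorial (l - k)) =
      n.choose l * n ! * l.choose k := by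
  rcases le_or_gt k l with hkl | hlk
  · have hD : ((n - k).descFactorial (n - l) : ℚ) = (n - k)! / (l - k)! := by
      rw [eq_div_iff (by positivity), mul_comm]
      have := Nat.factorial_mul_descFactorial (show n - l ≤ n - k by omega)
      rw [show n - k - (n - l) = l - k by omega] at this
      exact_mod_cast this
    have hA : ((n - l + 1).ascFactorial (l - k) : ℚ) = (n - k)! / (n - l)! := by
      rw [eq_div_iff (by positivity), mul_comm]
      have := Nat.factorial_mul_ascFactorial (n - l) (l - k)
      rw [show n - l + (l - k) = n - k by omega] at this
      exact_mod_cast this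
    rw [hD, hA, Nat.cast_choose ℚ (hkl.trans hln), Nat.cast_choose ℚ hln, Nat.cast_choose ℚ hkl]
    field_simp
  · rcases le_or_gt k n with hkn | hnk
    · have : (n - k).descFactorial (n - l) = 0 := Nat.descFactorial_eq_zero_iff_lt.2 (by omega)
      simp [this, Nat.choose_eq_zero_of_lt hlk]
    · simp [Nat.choose_eq_zero_of_lt hnk, Nat.choose_eq_zero_of_lt hlk]

theorem fdiff_pn_eval_zero (n : ℕ) (s ε : ℚ) (hε : ε ≠ 0) (l : ℕ) (hl : l ≤ n) :
    ((fdiff ε)^[n - l]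
        (∑ k ∈ Finset.range (n + 1),
          C ((k.factorial : ℚ) * s ^ k * (n.choose k : ℚ) ^ 2) *
            ∏ j ∈ Finset.range (n - k), (X + C (((j : ℚ) + 1) * ε)))).eval 0 =
      (l.factorial : ℚ) * (n.choose l : ℚ) * ((n.factorial : ℚ) / (l.factorial : ℚ)) *
        (s + ε) ^ l := by
  have hR (k : ℕ) : ∏ j ∈ range (n - k), (X + C (((j : ℚ) + 1) * ε)) = risingProd ε ε (n - k) :=
    prod_congr rfl fun j _ => by rw [add_one_mul, add_comm (_ * ε)]
  have hbinom : ∑ k ∈ range (n + 1), s ^ k * ε ^ (l - k) * (l.choose k : ℚ) = (s + ε) ^ l := by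
    rw [add_pow]
    refine (sum_subset (range_subset_range.2 (by omega)) fun k _ hk => ?_).symm
    rw [mem_range, not_lt] at hk
    simp [Nat.choose_eq_zero_of_lt (show l < k by omega)]
  calc _ = ∑ k ∈ range (n + 1), (n.choose l : ℚ) * n.factorial *
        (s ^ k * ε ^ (l - k) * (l.choose k : ℚ)) := by
        simp only [hR, iterate_fdiff_sum, iterate_fdiff_C_mul, eval_finsetSum, eval_mul, eval_C,
          eval_zero_iterate_fdiff_risingProd hε]
        refine sum_congr rfl fun k _ => ?_
        -- truncated subtraction: both sides are `0` when `k > l`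
        rw [show n - k - (n - l) = l - k by omega]
        linear_combination s ^ k * ε ^ (l - k) *
          factorial_mul_choose_sq_mul_descFactorial_mul_ascFactorial hl k
    _ = _ := by
        rw [← mul_sum, hbinom]
        field_simp
end
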